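/- arXiv:2301.04456 — 3 statements merged into one kernel-verified Lean document; each statement's English description precedes it below -/
import Mathlib

section
/- Let n be even and let f1, f2, f3 : F_2^n → F_2 be bent functions with duals f1*, f2*, f3* respectively. Assume that f1 + f2 + f3 is also bent and that its dual equals f1* + f2* + f3*. Then the function h(x) = f1(x)f2(x) + f1(x)f3(x) + f2(x)f3(x) is bent, and its dual is h*(x) = f1*(x)f2*(x) + f1*(x)f3*(x) + f2*(x)f3*(x). -/
noncomputable section

/-- `(-1)^c` for `c ∈ F_2`. -/
def sgn (c : ZMod 2) : ℤ := if c = 0 then 1 else -1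

/-- Walsh–Hadamard transform of a Boolean function on `F_2^n`. -/
def walsh {n : ℕ} (f : (Fin n → ZMod 2) → ZMod 2) (μ : Fin n → ZMod 2) : ℤ :=
  ∑ x : Fin n → ZMod 2, sgn (f x + ∑ i, μ i * x i)

/-- `f` is bent: `n` is even and all Walsh coefficients are `±2^(n/2)`. -/
def IsBent {n : ℕ} (f : (Fin n → ZMod 2) → ZMod 2) : Prop :=
  Even n ∧ ∀ μ, walsh f μ = 2 ^ (n / 2) ∨ walsh f μ = -(2 ^ (n / 2))

/-- `fs` is the dual of the bent function `f`. -/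
def IsDualOf {n : ℕ} (fs f : (Fin n → ZMod 2) → ZMod 2) : Prop :=
  ∀ μ, walsh f μ = 2 ^ (n / 2) * sgn (fs μ)

lemma key (a b c d : ZMod 2) :
    2 * sgn (a * b + a * c + b * c + d) = sgn (a + d) + sgn (b + d) + sgn (c + d) - sgn (a + b + c + d) := by
  revert a b c d; decide

lemma key0 (a b c : ZMod 2) :
    2 * sgn (a * b + a * c + b * c) = sgn a + sgn b + sgn c - sgn (a + b + c) := by
  revert a b c; decide

/-- Carlet's theorem: if `f1, f2, f3` and `f1+f2+f3` are bent and the dual of the sum is the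
sum of the duals, then `f1 f2 + f1 f3 + f2 f3` is bent with dual `f1* f2* + f1* f3* + f2* f3*`. -/
theorem statement0 {n : ℕ} (hn : Even n)
    (f1 f2 f3 f1s f2s f3s : (Fin n → ZMod 2) → ZMod 2)
    (h1 : IsBent f1) (h2 : IsBent f2) (h3 : IsBent f3)
    (hd1 : IsDualOf f1s f1) (hd2 : IsDualOf f2s f2) (hd3 : IsDualOf f3s f3)
    (hsum : IsBent (fun x => f1 x + f2 x + f3 x))
    (hsumdual : IsDualOf (fun x => f1s x + f2s x + f3s x) (fun x => f1 x + f2 x + f3 x)) :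
    IsBent (fun x => f1 x * f2 x + f1 x * f3 x + f2 x * f3 x) ∧
      IsDualOf (fun x => f1s x * f2s x + f1s x * f3s x + f2s x * f3s x)
        (fun x => f1 x * f2 x + f1 x * f3 x + f2 x * f3 x) := by
  have hdual : IsDualOf (fun x => f1s x * f2s x + f1s x * f3s x + f2s x * f3s x)
      (fun x => f1 x * f2 x + f1 x * f3 x + f2 x * f3 x) := by
    intro μ
    have hmain : 2 * walsh (fun x => f1 x * f2 x + f1 x * f3 x + f2 x * f3 x) μ =
        walsh f1 μ + walsh f2 μ + walsh f3 μ - walsh (fun x => f1 x + f2 x + f3 x) μ := by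
      unfold walsh
      rw [Finset.mul_sum]
      simp only [← Finset.sum_add_distrib, ← Finset.sum_sub_distrib]
      apply Finset.sum_congr rfl
      intro x _
      exact key (f1 x) (f2 x) (f3 x) (∑ i, μ i * x i)
    rw [hd1 μ, hd2 μ, hd3 μ, hsumdual μ] at hmain
    simp only at hmain
    have : 2 * walsh (fun x => f1 x * f2 x + f1 x * f3 x + f2 x * f3 x) μ =
        2 * ((2:ℤ) ^ (n / 2) * sgn (f1s μ * f2s μ + f1s μ * f3s μ + f2s μ * f3s μ)) := by
      rw [hmain, show (2:ℤ) ^ (n / 2) * sgn (f1s μ) + 2 ^ (n / 2) * sgn (f2s μ) +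
          2 ^ (n / 2) * sgn (f3s μ) - 2 ^ (n / 2) * sgn (f1s μ + f2s μ + f3s μ) =
          2 ^ (n / 2) * (sgn (f1s μ) + sgn (f2s μ) + sgn (f3s μ) - sgn (f1s μ + f2s μ + f3s μ))
          by ring, ← key0]
      ring
    exact mul_left_cancel₀ (by norm_num) this
  refine ⟨⟨hn, fun μ => ?_⟩, hdual⟩
  rw [hdual μ]
  rcases (show sgn (f1s μ * f2s μ + f1s μ * f3s μ + f2s μ * f3s μ) = 1 ∨
      sgn (f1s μ * f2s μ + f1s μ * f3s μ + f2s μ * f3s μ) = -1 by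
    unfold sgn; split <;> simp) with h | h <;> rw [h] <;> simp
end
end

section
/- Let n be even and let f, g_1, …, g_r : F_2^n → F_2 be Boolean functions, and let f*, g_1*, …, g_r* : F_2^n → F_2. Assume that for every ε_0 ∈ F_2 and every (ε_1,…,ε_r) ∈ F_2^r with ε_0 + ε_1 + ⋯ + ε_r = 1 in F_2 (i.e., an odd number of functions is selected), the function ε_0 f + ∑_{i=1}^r ε_i g_i is bent and its dual equals ε_0 f* + ∑_{i=1}^r ε_i g_i*. Then for every Boolean function F : F_2^r → F_2, the function h(x) = f(x) + F(f(x)+g_1(x), …, f(x)+g_r(x)) is bent, and its dual is h*(x) = f*(x) + F(f*(x)+g_1*(x), …, f*(x)+g_r*(x)). -/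
noncomputable section

lemma sgn_add (a b : ZMod 2) : sgn (a + b) = sgn a * sgn b := by revert a b; decide

lemma sgn_sum {α : Type*} (s : Finset α) (f : α → ZMod 2) :
    sgn (∑ a ∈ s, f a) = ∏ a ∈ s, sgn (f a) := by
  induction s using Finset.cons_induction with
  | empty => simp [sgn]
  | cons a s ha ih => simp [Finset.sum_cons, Finset.prod_cons, sgn_add, ih]

lemma orth1 (c : ZMod 2) : ∑ x : ZMod 2, sgn (x * c) = if c = 0 then 2 else 0 := by
  revert c; decide

lemma orth {r : ℕ} (v : Fin r → ZMod 2) :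
    ∑ ω : Fin r → ZMod 2, sgn (∑ i, ω i * v i) = if v = 0 then 2 ^ r else 0 := by
  simp only [sgn_sum]
  rw [← Fintype.piFinset_univ,
    ← Finset.prod_univ_sum (fun _ : Fin r => (Finset.univ : Finset (ZMod 2)))
      (fun i j => sgn (j * v i))]
  simp only [orth1]
  by_cases h : v = 0
  · simp [h]
  · obtain ⟨i, hi⟩ := Function.ne_iff.mp h
    rw [if_neg h]
    exact Finset.prod_eq_zero (Finset.mem_univ i) (by simpa using hi)

lemma inversion {r : ℕ} (F : (Fin r → ZMod 2) → ZMod 2) (y : Fin r → ZMod 2) :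
    ∑ ω : Fin r → ZMod 2,
      (∑ u : Fin r → ZMod 2, sgn (F u + ∑ i, ω i * u i)) * sgn (∑ i, ω i * y i)
      = 2 ^ r * sgn (F y) := by
  have key : ∀ ω u : Fin r → ZMod 2,
      sgn (F u + ∑ i, ω i * u i) * sgn (∑ i, ω i * y i)
      = sgn (F u) * sgn (∑ i, ω i * (u i + y i)) := by
    intro ω u
    rw [sgn_add, mul_assoc, ← sgn_add]
    congr 2
    rw [← Finset.sum_add_distrib]
    exact Finset.sum_congr rfl fun i _ => (mul_add _ _ _).symm
  simp only [Finset.sum_mul, key]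
  rw [Finset.sum_comm]
  have h2 : ∀ u : Fin r → ZMod 2,
      ∑ ω : Fin r → ZMod 2, sgn (F u) * sgn (∑ i, ω i * (u i + y i))
      = sgn (F u) * (if (fun i => u i + y i) = 0 then 2 ^ r else 0) := by
    intro u; rw [← Finset.mul_sum, orth]
  simp only [h2]
  rw [Finset.sum_eq_single y]
  · have : (fun i => y i + y i) = (0 : Fin r → ZMod 2) := by
      funext i; exact CharTwo.add_self_eq_zero _
    rw [if_pos this, mul_comm]
  · intro u _ hu
    have : (fun i => u i + y i) ≠ (0 : Fin r → ZMod 2) := by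
      intro h0
      apply hu; funext i
      have := congrFun h0 i
      exact (by decide : ∀ a b : ZMod 2, a + b = 0 → a = b) _ _ this
    rw [if_neg this, mul_zero]
  · intro h; exact absurd (Finset.mem_univ y) h

lemma sum_mul_add {r : ℕ} (ω : Fin r → ZMod 2) (a : ZMod 2) (b : Fin r → ZMod 2) :
    ∑ i, ω i * (a + b i) = (∑ i, ω i) * a + ∑ i, ω i * b i := by
  rw [Finset.sum_mul, ← Finset.sum_add_distrib]
  exact Finset.sum_congr rfl fun i _ => mul_add _ _ _


/-- Li et al.: if the sum of any odd number of functions among `f, g_1, …, g_r` is bent with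
dual the corresponding sum of `f*, g_1*, …, g_r*`, then for every `F`,
`h(x) = f(x) + F(f(x)+g_1(x), …, f(x)+g_r(x))` is bent with dual
`f*(x) + F(f*(x)+g_1*(x), …, f*(x)+g_r*(x))`. -/
theorem statement5 {n r : ℕ} (hn : Even n)
    (f fs : (Fin n → ZMod 2) → ZMod 2)
    (g gs : Fin r → ((Fin n → ZMod 2) → ZMod 2))
    (hyp : ∀ (ε0 : ZMod 2) (ε : Fin r → ZMod 2), ε0 + ∑ i, ε i = 1 →
      IsBent (fun x => ε0 * f x + ∑ i, ε i * g i x) ∧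
        IsDualOf (fun x => ε0 * fs x + ∑ i, ε i * gs i x)
          (fun x => ε0 * f x + ∑ i, ε i * g i x))
    (F : (Fin r → ZMod 2) → ZMod 2) :
    IsBent (fun x => f x + F (fun i => f x + g i x)) ∧
      IsDualOf (fun x => fs x + F (fun i => fs x + gs i x))
        (fun x => f x + F (fun i => f x + g i x)) := by
  classical
  have key : ∀ μ, walsh (fun x => f x + F (fun i => f x + g i x)) μ
      = 2 ^ (n / 2) * sgn (fs μ + F (fun i => fs μ + gs i μ)) := by
    intro μ
    have h2r : (2 : ℤ) ^ r ≠ 0 := by positivity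
    apply mul_left_cancel₀ h2r
    calc (2:ℤ)^r * walsh (fun x => f x + F (fun i => f x + g i x)) μ
        = ∑ x : Fin n → ZMod 2,
            sgn (f x + ∑ i, μ i * x i) * (2^r * sgn (F (fun i => f x + g i x))) := by
          simp only [walsh]
          rw [Finset.mul_sum]
          refine Finset.sum_congr rfl fun x _ => ?_
          have hx : (f x + F fun i => f x + g i x) + ∑ i, μ i * x i
              = (f x + ∑ i, μ i * x i) + F (fun i => f x + g i x) := by ring
          rw [hx, sgn_add]
          ring
      _ = ∑ x : Fin n → ZMod 2, ∑ ω : Fin r → ZMod 2,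
            (∑ u : Fin r → ZMod 2, sgn (F u + ∑ i, ω i * u i)) *
              (sgn (f x + ∑ i, μ i * x i) * sgn (∑ i, ω i * (f x + g i x))) := by
          refine Finset.sum_congr rfl fun x _ => ?_
          rw [← inversion F (fun i => f x + g i x), Finset.mul_sum]
          exact Finset.sum_congr rfl fun ω _ => by ring
      _ = ∑ ω : Fin r → ZMod 2, (∑ u : Fin r → ZMod 2, sgn (F u + ∑ i, ω i * u i)) *
            walsh (fun x => (1 + ∑ i, ω i) * f x + ∑ i, ω i * g i x) μ := by
          rw [Finset.sum_comm]
          refine Finset.sum_congr rfl fun ω _ => ?_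
          simp only [walsh]
          rw [Finset.mul_sum]
          refine Finset.sum_congr rfl fun x _ => ?_
          congr 1
          rw [← sgn_add]
          congr 1
          rw [sum_mul_add]
          ring
      _ = ∑ ω : Fin r → ZMod 2, (∑ u : Fin r → ZMod 2, sgn (F u + ∑ i, ω i * u i)) *
            (2 ^ (n/2) * sgn ((1 + ∑ i, ω i) * fs μ + ∑ i, ω i * gs i μ)) := by
          refine Finset.sum_congr rfl fun ω _ => ?_
          congr 1
          have hodd : (1 + ∑ i, ω i) + ∑ i, ω i = 1 := by
            rw [add_assoc, CharTwo.add_self_eq_zero, add_zero]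
          exact (hyp _ ω hodd).2 μ
      _ = 2 ^ (n/2) * sgn (fs μ) *
            ∑ ω : Fin r → ZMod 2, (∑ u : Fin r → ZMod 2, sgn (F u + ∑ i, ω i * u i)) *
              sgn (∑ i, ω i * (fs μ + gs i μ)) := by
          rw [Finset.mul_sum]
          refine Finset.sum_congr rfl fun ω _ => ?_
          have h1 : (1 + ∑ i, ω i) * fs μ + ∑ i, ω i * gs i μ
              = fs μ + ∑ i, ω i * (fs μ + gs i μ) := by
            rw [sum_mul_add]; ring
          rw [h1, sgn_add]; ring
      _ = 2 ^ (n/2) * sgn (fs μ) * (2^r * sgn (F (fun i => fs μ + gs i μ))) := by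
          rw [inversion]
      _ = 2^r * (2 ^ (n/2) * sgn (fs μ + F (fun i => fs μ + gs i μ))) := by
          rw [sgn_add]; ring
  refine ⟨⟨hn, fun μ => ?_⟩, key⟩
  rw [key μ]
  have : sgn (fs μ + F (fun i => fs μ + gs i μ)) = 1 ∨
      sgn (fs μ + F (fun i => fs μ + gs i μ)) = -1 := by
    unfold sgn; split <;> tauto
  rcases this with h | h <;> rw [h]
  · left; rw [mul_one]
  · right; rw [mul_neg_one]
end
end

section
/- Let n be even, let f, g_1, …, g_r : F_2^n → F_2, and let φ : F_2^n → F_2^r be given by φ_i = f + g_i for 1 ≤ i ≤ r. Then the following are equivalent: (1) there exist f* : F_2^n → F_2 and φ' = (φ'_1,…,φ'_r) : F_2^n → F_2^r such that for every ω ∈ F_2^r and every β ∈ F_2^n, the Walsh–Hadamard transform of x ↦ f(x) + ω·φ(x) at β equals 2^{n/2}·(-1)^{f*(β) + ω·φ'(β)}; (2) there exist f*, g_1*, …, g_r* : F_2^n → F_2 such that for every ε_0 ∈ F_2 and (ε_1,…,ε_r) ∈ F_2^r with ε_0 + ε_1 + ⋯ + ε_r = 1 in F_2, the function ε_0 f +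 ∑_{i=1}^r ε_i g_i is bent and its dual equals ε_0 f* + ∑_{i=1}^r ε_i g_i*. -/
noncomputable section

lemma walsh_congr {n : ℕ} {f1 f2 : (Fin n → ZMod 2) → ZMod 2} (h : ∀ x, f1 x = f2 x)
    (β : Fin n → ZMod 2) : walsh f1 β = walsh f2 β := by
  unfold walsh; exact Finset.sum_congr rfl fun x _ => by rw [h x]

lemma sgn_pm (c : ZMod 2) : sgn c = 1 ∨ sgn c = -1 := by
  unfold sgn; split <;> simp

/-- For `φ_i = f + g_i`, property `P_r` holds (there are `f*, φ'` with each `f + ω·φ` bent of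
dual `f* + ω·φ'`) iff the sum of any odd number of functions among `f, g_1, …, g_r` is bent
with dual the corresponding sum of some `f*, g_1*, …, g_r*`. -/
theorem statement8 {n r : ℕ} (hn : Even n)
    (f : (Fin n → ZMod 2) → ZMod 2) (g : Fin r → ((Fin n → ZMod 2) → ZMod 2)) :
    (∃ (fs : (Fin n → ZMod 2) → ZMod 2) (φ' : Fin r → ((Fin n → ZMod 2) → ZMod 2)),
      ∀ (ω : Fin r → ZMod 2) (β : Fin n → ZMod 2),
        walsh (fun x => f x + ∑ i, ω i * (f x + g i x)) β
          = 2 ^ (n / 2) * sgn (fs β + ∑ i, ω i * φ' i β)) ↔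
    (∃ (fs : (Fin n → ZMod 2) → ZMod 2) (gs : Fin r → ((Fin n → ZMod 2) → ZMod 2)),
      ∀ (ε0 : ZMod 2) (ε : Fin r → ZMod 2), ε0 + ∑ i, ε i = 1 →
        IsBent (fun x => ε0 * f x + ∑ i, ε i * g i x) ∧
          IsDualOf (fun x => ε0 * fs x + ∑ i, ε i * gs i x)
            (fun x => ε0 * f x + ∑ i, ε i * g i x)) := by
  constructor
  · rintro ⟨fs, φ', h⟩
    refine ⟨fs, fun i x => fs x + φ' i x, ?_⟩
    intro ε0 ε hsum
    have hε0 : ε0 = 1 + ∑ i, ε i := by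
      rw [eq_sub_of_add_eq hsum, CharTwo.sub_eq_add]
    have hdual : IsDualOf (fun x => ε0 * fs x + ∑ i, ε i * (fs x + φ' i x))
        (fun x => ε0 * f x + ∑ i, ε i * g i x) := by
      intro β
      have hfun : ∀ x, ε0 * f x + ∑ i, ε i * g i x
          = f x + ∑ i, ε i * (f x + g i x) := by
        intro x
        simp only [hε0, mul_add, Finset.sum_add_distrib, ← Finset.sum_mul]
        ring
      have hdualfun : ε0 * fs β + ∑ i, ε i * (fs β + φ' i β)
          = fs β + ∑ i, ε i * φ' i β := by
        simp only [hε0, mul_add, Finset.sum_add_distrib, ← Finset.sum_mul]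
        linear_combination ((∑ i, ε i) * fs β) * (CharTwo.two_eq_zero (R := ZMod 2))
      beta_reduce
      rw [walsh_congr hfun, hdualfun]
      exact h ε β
    refine ⟨⟨hn, fun μ => ?_⟩, hdual⟩
    rw [hdual μ]
    rcases sgn_pm (ε0 * fs μ + ∑ i, ε i * (fs μ + φ' i μ)) with hs | hs <;>
      rw [hs] <;> [left; right] <;> ring
  · rintro ⟨fs, gs, h⟩
    refine ⟨fs, fun i x => fs x + gs i x, ?_⟩
    intro ω β
    have hsum : (1 + ∑ i, ω i) + ∑ i, ω i = 1 := by
      rw [add_assoc, CharTwo.add_self_eq_zero, add_zero]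
    have hd := (h (1 + ∑ i, ω i) ω hsum).2 β
    have hfun : ∀ x, (1 + ∑ i, ω i) * f x + ∑ i, ω i * g i x
        = f x + ∑ i, ω i * (f x + g i x) := by
      intro x
      simp only [mul_add, Finset.sum_add_distrib, ← Finset.sum_mul]
      ring
    rw [walsh_congr hfun] at hd
    rw [hd]
    beta_reduce
    congr 1
    have : (1 + ∑ i, ω i) * fs β + ∑ i, ω i * gs i β
        = fs β + ∑ i, ω i * (fs β + gs i β) := by
      simp only [mul_add, Finset.sum_add_distrib, ← Finset.sum_mul]
      ring
    rw [this]
end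
end
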